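/- Let N be a matroid and let x be a coloop of N. If N\x (the deletion of x from N) is a gammoid, then N is a gammoid. -/

import Mathlib

/-!
Common definitions: digraphs, linkings, gammoids, minors, isomorphism.
-/

universe u v

open Set

/-- `X` is linked to `T` in the digraph on vertex type `V` with arc relation `A`:
there is a family of pairwise vertex-disjoint directed paths, one starting at each
vertex of `X`, each ending at a vertex of `T`. A path may be a single vertex. -/
def Linked {V : Type*} (A : V → V → Prop) (T X : Set V) : Prop :=
  ∃ P : V → List V,
    (∀ x ∈ X, (P x).head? = some x ∧ (P x).Nodup ∧ (P x).Chain' A ∧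
      ∃ t ∈ T, (P x).getLast? = some t) ∧
    ∀ x ∈ X, ∀ y ∈ X, x ≠ y → ∀ v, v ∈ (P x) → v ∉ (P y)

/-- `M` is the matroid `L(G,S,T)`: its ground set is `S`, and its independent sets
are exactly the subsets of `S` that are linked to `T`. -/
def IsLinkMatroid {V : Type*} (A : V → V → Prop) (S T : Set V) (M : Matroid V) : Prop :=
  M.E = S ∧ ∀ I : Set V, M.Indep I ↔ I ⊆ S ∧ Linked A T I

/-- A matroid is a gammoid if it is (isomorphic to) a matroid of the form `L(G,S,T)`:
there are a digraph on a vertex type `V`, a target set `T ⊆ V`, and an injection `e`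
of the ground set into `V` (whose image plays the role of `S`), such that a set is
independent if and only if its image is linked to `T`. -/
def IsGammoid {α : Type u} (M : Matroid α) : Prop :=
  ∃ (V : Type u) (A : V → V → Prop) (T : Set V) (e : α → V),
    Set.InjOn e M.E ∧ ∀ I, I ⊆ M.E → (M.Indep I ↔ Linked A T (e '' I))

/-- Deletion of a set from a matroid. -/
def Matroid.del {α : Type*} (M : Matroid α) (D : Set α) : Matroid α := M.restrict (M.E \ D)

/-- Contraction of a set from a matroid, defined by duality. -/
def Matroid.con {α : Type*} (M : Matroid α) (C : Set α) : Matroid α := (M✶.del C)✶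

/-- One step of taking a minor: a single deletion or a single contraction. -/
def MinorStep {α : Type*} (N M : Matroid α) : Prop :=
  (∃ D, N = M.del D) ∨ (∃ C, N = M.con C)

/-- `N` is a minor of `M` if it is obtained from `M` by a sequence of deletions
and contractions. -/
def IsMinor {α : Type*} (N M : Matroid α) : Prop :=
  Relation.ReflTransGen MinorStep N M

/-- Isomorphism of matroids: a bijection between the ground sets under which
independence is preserved and reflected. -/
def MatroidIso {α : Type u} {β : Type v} (M : Matroid α) (N : Matroid β) : Prop :=
  ∃ e : α → β, Set.BijOn e M.E N.E ∧ ∀ I, I ⊆ M.E → (M.Indep I ↔ N.Indep (e '' I))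

/-- An excluded minor for the class of gammoids: a matroid that is not a gammoid,
every proper minor of which is a gammoid. -/
def IsExcludedMinor {α : Type u} (M : Matroid α) : Prop :=
  ¬ IsGammoid M ∧ ∀ N : Matroid α, IsMinor N M → N ≠ M → IsGammoid N

/-- A circuit: a minimal dependent set. -/
def IsCircuit {α : Type*} (M : Matroid α) (C : Set α) : Prop :=
  C ⊆ M.E ∧ ¬ M.Indep C ∧ ∀ C' : Set α, C' ⊂ C → M.Indep C'

/-- A coloop: an element contained in every base. -/
def IsColoop {α : Type*} (M : Matroid α) (x : α) : Prop :=
  x ∈ M.E ∧ ∀ B, M.IsBase B → x ∈ B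

/-!
A representation of `N ＼ x` by an arc relation `A`, targets `T` and an injection `e` extends
to one of `N`: adjoin a new vertex without arcs, add it to the targets and send `x` to it.
Its one-vertex path meets no other path, so a set is linked iff its part without `x` is, and
since `x` is a coloop, the same holds for independence in `N`.
-/

namespace List

theorem IsChain.head?_eq_or_exists_rel_of_mem {V : Type*} {R : V → V → Prop} {w : V} :
    ∀ {l : List V}, l.IsChain R → w ∈ l → l.head? = some w ∨ ∃ u, R u w
  | [], _, hw => absurd hw List.not_mem_nil
  | a :: l, hl, hw => by
    rcases List.mem_cons.mp hw with rfl | hw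
    · exact Or.inl rfl
    obtain ⟨b, l', rfl⟩ := List.exists_cons_of_ne_nil (List.ne_nil_of_mem hw)
    obtain ⟨hab, hl'⟩ := List.isChain_cons_cons.mp hl
    refine Or.inr ((hl'.head?_eq_or_exists_rel_of_mem hw).elim (fun hb => ⟨a, ?_⟩) id)
    rwa [← Option.some_injective _ hb]

end List

section update

variable {α β : Type*} [DecidableEq α] {g : α → β} {a : α} {b : β} {I : Set α}

theorem Set.image_sdiff_singleton_subset_image_update :
    g '' (I \ {a}) ⊆ Function.update g a b '' I := by
  rintro _ ⟨c, ⟨hc, hca⟩, rfl⟩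
  exact ⟨c, hc, Function.update_of_ne hca b g⟩

theorem Set.image_update_subset_insert_image_sdiff_singleton :
    Function.update g a b '' I ⊆ insert b (g '' (I \ {a})) := by
  rintro _ ⟨c, hc, rfl⟩
  by_cases hca : c = a
  · subst hca
    exact Or.inl (Function.update_self c b g)
  · exact Or.inr ⟨c, ⟨hc, hca⟩, (Function.update_of_ne hca b g).symm⟩

theorem Set.InjOn.update {s : Set α} (hg : Set.InjOn g (s \ {a})) (hb : b ∉ g '' (s \ {a})) :
    Set.InjOn (Function.update g a b) s := by
  have hs : s ⊆ insert a (s \ {a}) := fun c hc => (em (c = a)).imp id fun hca => ⟨hc, hca⟩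
  refine Set.InjOn.mono hs ((Set.injOn_insert fun h => h.2 rfl).mpr ⟨?_, ?_⟩)
  · exact hg.congr fun c hc => (Function.update_of_ne hc.2 b g).symm
  · rwa [Function.update_self, Set.image_congr fun c hc => Function.update_of_ne hc.2 b g]

end update

section Linked

variable {V W : Type*} {A : V → V → Prop} {T T' X Y Z : Set V}

theorem Linked.subset (h : Linked A T X) (hYX : Y ⊆ X) : Linked A T Y := by
  obtain ⟨P, hpath, hdisj⟩ := h
  exact ⟨P, fun x hx => hpath x (hYX hx), fun x hx y hy => hdisj x (hYX hx) y (hYX hy)⟩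

theorem Linked.mono_target (h : Linked A T X) (hTT' : T ⊆ T') : Linked A T' X := by
  obtain ⟨P, hpath, hdisj⟩ := h
  refine ⟨P, fun x hx => ?_, hdisj⟩
  obtain ⟨hhead, hnodup, hchain, t, ht, hlast⟩ := hpath x hx
  exact ⟨hhead, hnodup, hchain, t, hTT' ht, hlast⟩

theorem Linked.insert_of_forall_not_rel {t : V} (h : Linked A T X) (ht : t ∈ T)
    (hA : ∀ u, ¬ A u t) : Linked A T (insert t X) := by
  classical
  by_cases htX : t ∈ X
  · rwa [Set.insert_eq_of_mem htX]
  obtain ⟨P, hpath, hdisj⟩ := h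
  have ht_notMem : ∀ x ∈ X, t ∉ P x := fun x hx htx => by
    obtain ⟨hhead, -, hchain, -⟩ := hpath x hx
    obtain hhead' | ⟨u, hu⟩ := hchain.head?_eq_or_exists_rel_of_mem htx
    · exact htX (Option.some_injective _ (hhead.symm.trans hhead') ▸ hx)
    · exact hA u hu
  refine ⟨Function.update P t [t], ?_, ?_⟩
  · rintro x (rfl | hx)
    · rw [Function.update_self]
      exact ⟨rfl, List.nodup_singleton _, List.isChain_singleton _, _, ht, rfl⟩
    · simpa [Function.update_of_ne (ne_of_mem_of_not_mem hx htX)] using hpath x hx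
  · rintro x (rfl | hx) y (rfl | hy) hxy v hv
    · exact absurd rfl hxy
    · simp only [Function.update_self, List.mem_singleton] at hv
      rw [hv, Function.update_of_ne (ne_of_mem_of_not_mem hy htX)]
      exact ht_notMem y hy
    · rw [Function.update_of_ne (ne_of_mem_of_not_mem hx htX)] at hv
      simpa using ne_of_mem_of_not_mem hv (ht_notMem x hx)
    · rw [Function.update_of_ne (ne_of_mem_of_not_mem hx htX)] at hv
      rw [Function.update_of_ne (ne_of_mem_of_not_mem hy htX)]
      exact hdisj x hx y hy hxy v hv

theorem linked_iff_of_subset_of_subset_insert {t : V} (hYZ : Y ⊆ Z) (hZY : Z ⊆ insert t Y)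
    (ht : t ∈ T) (hA : ∀ u, ¬ A u t) : Linked A T Z ↔ Linked A T Y :=
  ⟨fun h => h.subset hYZ, fun h => (h.insert_of_forall_not_rel ht hA).subset hZY⟩

theorem Linked.map {f : V → W} (hf : f.Injective) (h : Linked A T X) :
    Linked (Relation.Map A f f) (f '' T) (f '' X) := by
  obtain ⟨P, hpath, hdisj⟩ := h
  refine ⟨Function.extend f (fun x => (P x).map f) fun _ => [], ?_, ?_⟩
  · rintro _ ⟨x, hx, rfl⟩
    obtain ⟨hhead, hnodup, hchain, t, ht, hlast⟩ := hpath x hx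
    rw [hf.extend_apply]
    refine ⟨by simp [hhead], hnodup.map hf, ?_, f t, ⟨t, ht, rfl⟩, by simp [hlast]⟩
    exact (List.isChain_map f).mpr (hchain.imp fun a b hab => ⟨a, b, hab, rfl, rfl⟩)
  · rintro _ ⟨x, hx, rfl⟩ _ ⟨y, hy, rfl⟩ hxy _ hv hv'
    rw [hf.extend_apply] at hv hv'
    obtain ⟨v, hvx, rfl⟩ := List.mem_map.mp hv
    exact hdisj x hx y hy (ne_of_apply_ne f hxy) v hvx ((List.mem_map_of_injective hf).mp hv')

theorem Linked.comap {f : V → W} (hf : f.Injective) {T : Set W}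
    (h : Linked (Relation.Map A f f) T (f '' X)) : Linked A (f ⁻¹' T) X := by
  obtain ⟨P, hpath, hdisj⟩ := h
  have hlift : ∀ x, ∃ l : List V, x ∈ X → l.map f = P (f x) := fun x => by
    by_cases hx : x ∈ X
    · obtain ⟨hhead, -, hchain, -⟩ := hpath (f x) ⟨x, hx, rfl⟩
      suffices P (f x) ∈ Set.range (List.map f) from this.imp fun l hl _ => hl
      -- every vertex of a path but its first is the head of an arc, so lies in the range of `f`
      rw [Set.range_list_map]
      intro w hw
      obtain hhead' | ⟨_, u, v, -, -, rfl⟩ := hchain.head?_eq_or_exists_rel_of_mem hw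
      · exact ⟨x, Option.some_injective _ (hhead.symm.trans hhead')⟩
      · exact ⟨v, rfl⟩
    · exact ⟨[], fun h => absurd h hx⟩
  choose Q hQ using hlift
  refine ⟨Q, fun x hx => ?_, fun x hx y hy hxy v hv hv' => ?_⟩
  · obtain ⟨hhead, hnodup, hchain, t, ht, hlast⟩ := hpath (f x) ⟨x, hx, rfl⟩
    rw [← hQ x hx] at hhead hnodup hchain hlast
    rw [List.head?_map, Option.map_eq_some_iff] at hhead
    rw [List.getLast?_map, Option.map_eq_some_iff] at hlast
    obtain ⟨a, ha, hfa⟩ := hhead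
    obtain ⟨s, hs, rfl⟩ := hlast
    refine ⟨hf hfa ▸ ha, hnodup.of_map f, ?_, s, ht, hs⟩
    exact ((List.isChain_map f).mp hchain).imp fun a b ⟨a', b', hab, ha, hb⟩ =>
      hf ha ▸ hf hb ▸ hab
  · exact hdisj (f x) ⟨x, hx, rfl⟩ (f y) ⟨y, hy, rfl⟩ (hf.ne hxy) (f v)
      (hQ x hx ▸ List.mem_map_of_mem hv) (hQ y hy ▸ List.mem_map_of_mem hv')

theorem linked_map_iff {f : V → W} (hf : f.Injective) {T : Set W} :
    Linked (Relation.Map A f f) T (f '' X) ↔ Linked A (f ⁻¹' T) X :=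
  ⟨Linked.comap hf, fun h => (h.map hf).mono_target (Set.image_preimage_subset f T)⟩

theorem linked_insert_none_iff_of_subset {S : Set (Option V)} (hXS : some '' X ⊆ S)
    (hSX : S ⊆ insert none (some '' X)) :
    Linked (Relation.Map A some some) (insert none (some '' T)) S ↔ Linked A T X := by
  have hnone : ∀ u, ¬ Relation.Map A some some u none := fun _ ⟨_, _, _, _, h⟩ =>
    Option.some_ne_none _ h
  have hT : some ⁻¹' insert none (some '' T) = T := by ext; simp
  rw [linked_iff_of_subset_of_subset_insert hXS hSX (Set.mem_insert _ _) hnone,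
    linked_map_iff (Option.some_injective V), hT]

end Linked

theorem gammoid_of_delete_coloop_general {α : Type u} (N : Matroid α)
    (x : α) (hx : IsColoop N x) (h : IsGammoid (N.del {x})) : IsGammoid N := by
  classical
  obtain ⟨V, A, T, e, he, hlink⟩ := h
  have hcoloops : {x} ⊆ N.coloops :=
    Set.singleton_subset_iff.mpr (Matroid.isColoop_iff_forall_mem_isBase.mpr hx.2)
  refine ⟨Option V, Relation.Map A some some, insert none (some '' T),
    Function.update (some ∘ e) x none, ?_, fun I hI => ?_⟩
  · exact ((Option.some_injective V).comp_injOn he).update (by simp)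
  have hIx : I \ {x} ⊆ (N.del {x}).E := Set.sdiff_subset_sdiff_left hI
  calc N.Indep I ↔ N.Indep (I \ {x}) :=
        (Matroid.sdiff_indep_iff_indep_of_subset_coloops hcoloops).symm
    _ ↔ (N.del {x}).Indep (I \ {x}) :=
        (Matroid.restrict_indep_iff.trans (and_iff_left hIx)).symm
    _ ↔ Linked A T (e '' (I \ {x})) := hlink _ hIx
    _ ↔ Linked (Relation.Map A some some) (insert none (some '' T))
          (Function.update (some ∘ e) x none '' I) := by
        rw [linked_insert_none_iff_of_subset] <;> rw [← Set.image_comp]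
        exacts [Set.image_sdiff_singleton_subset_image_update,
          Set.image_update_subset_insert_image_sdiff_singleton]

/-- If `x` is a coloop of `N` and `N \ x` is a gammoid, then `N` is a gammoid. -/
theorem gammoid_of_delete_coloop {α : Type u} (N : Matroid α) (hfin : N.Finite)
    (x : α) (hx : IsColoop N x) (h : IsGammoid (N.del {x})) : IsGammoid N :=
  gammoid_of_delete_coloop_general N x hx h
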